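/- Let X be a normed space with modulus of uniform convexity η : (0,2] → (0,1]. Define η₁(0) := 0, η₁(ε) := sup{η(ε') : 0 < ε' ≤ min{2, ε}}, and η̃(ε) := (1/2)·∫₀^ε η₁(t) dt. Then: (i) η̃ : [0,∞) → [0,∞) is convex; (ii) η̃(ε) ≤ ε/2 for all ε ≥ 0; (iii) 0 < η̃(ε) ≤ η₁(ε) for all ε ∈ (0,2]; and (iv) η̃ restricted to (0,2] is again a modulus of uniform convexity for X, i.e., for all ε ∈ (0,2] and x, y ∈ X with ‖x‖ ≤ 1, ‖y‖ ≤ 1 and ‖x−y‖ ≥ ε one has ‖(x+y)/2‖ ≤ 1 − η̃(ε). -/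
import Mathlib


/-- `η₁(ε) := sup {η(ε') : 0 < ε' ≤ min 2 ε}` for `ε > 0`, and `η₁(ε) := 0` otherwise. -/
noncomputable def eta1 (η : ℝ → ℝ) (ε : ℝ) : ℝ :=
  if 0 < ε then sSup {y : ℝ | ∃ ε' : ℝ, 0 < ε' ∧ ε' ≤ min 2 ε ∧ y = η ε'} else 0

/-- `η̃(ε) := (1/2)·∫₀^ε η₁(t) dt`. -/
noncomputable def etaTilde (η : ℝ → ℝ) (ε : ℝ) : ℝ :=
  (1 / 2) * ∫ t in (0 : ℝ)..ε, eta1 η t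

section Aux
variable (η : ℝ → ℝ)

lemma etaSet_nonempty {ε : ℝ} (hε : 0 < ε) :
    {y : ℝ | ∃ ε' : ℝ, 0 < ε' ∧ ε' ≤ min 2 ε ∧ y = η ε'}.Nonempty :=
  ⟨η (min 2 ε), min 2 ε, lt_min two_pos hε, le_rfl, rfl⟩

lemma etaSet_bddAbove (h1 : ∀ ε : ℝ, 0 < ε → ε ≤ 2 → η ε ≤ 1) (ε : ℝ) :
    BddAbove {y : ℝ | ∃ ε' : ℝ, 0 < ε' ∧ ε' ≤ min 2 ε ∧ y = η ε'} := by
  refine ⟨1, ?_⟩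
  rintro y ⟨ε', hε', hle, rfl⟩
  exact h1 ε' hε' (hle.trans (min_le_left _ _))

lemma eta1_pos (h1 : ∀ ε : ℝ, 0 < ε → ε ≤ 2 → η ε ≤ 1)
    (h0 : ∀ ε : ℝ, 0 < ε → ε ≤ 2 → 0 < η ε) {ε : ℝ} (hε : 0 < ε) :
    0 < eta1 η ε := by
  have hmem : η (min 2 ε) ∈ {y : ℝ | ∃ ε' : ℝ, 0 < ε' ∧ ε' ≤ min 2 ε ∧ y = η ε'} :=
    ⟨min 2 ε, lt_min two_pos hε, le_rfl, rfl⟩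
  have := le_csSup (etaSet_bddAbove η h1 ε) hmem
  have hpos : 0 < η (min 2 ε) := h0 _ (lt_min two_pos hε) (min_le_left _ _)
  rw [eta1, if_pos hε]
  linarith

lemma eta1_nonneg (h1 : ∀ ε : ℝ, 0 < ε → ε ≤ 2 → η ε ≤ 1)
    (h0 : ∀ ε : ℝ, 0 < ε → ε ≤ 2 → 0 < η ε) (ε : ℝ) :
    0 ≤ eta1 η ε := by
  by_cases hε : 0 < ε
  · exact (eta1_pos η h1 h0 hε).le
  · rw [eta1, if_neg hε]

lemma eta1_le_one (h1 : ∀ ε : ℝ, 0 < ε → ε ≤ 2 → η ε ≤ 1) (ε : ℝ) :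
    eta1 η ε ≤ 1 := by
  by_cases hε : 0 < ε
  · rw [eta1, if_pos hε]
    refine csSup_le (etaSet_nonempty η hε) ?_
    rintro y ⟨ε', hε', hle, rfl⟩
    exact h1 ε' hε' (hle.trans (min_le_left _ _))
  · rw [eta1, if_neg hε]; norm_num

lemma eta1_mono (h1 : ∀ ε : ℝ, 0 < ε → ε ≤ 2 → η ε ≤ 1)
    (h0 : ∀ ε : ℝ, 0 < ε → ε ≤ 2 → 0 < η ε) :
    Monotone (eta1 η) := by
  intro a b hab
  by_cases ha : 0 < a
  · have hb : 0 < b := ha.trans_le hab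
    rw [eta1, if_pos ha, eta1, if_pos hb]
    refine csSup_le_csSup (etaSet_bddAbove η h1 b) (etaSet_nonempty η ha) ?_
    rintro y ⟨ε', hε', hle, rfl⟩
    exact ⟨ε', hε', hle.trans (min_le_min le_rfl hab), rfl⟩
  · rw [eta1, if_neg ha]
    exact eta1_nonneg η h1 h0 b

end Aux
/-- the function `η̃` is convex on `[0,∞)`, satisfies `η̃(ε) ≤ ε/2`,
satisfies `0 < η̃(ε) ≤ η₁(ε)` on `(0,2]`, and is again a modulus of uniform
convexity for `X`. -/
theorem etaTilde_properties
    {X : Type*} [NormedAddCommGroup X] [NormedSpace ℝ X]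
    (η : ℝ → ℝ)
    (hη_range : ∀ ε : ℝ, 0 < ε → ε ≤ 2 → 0 < η ε ∧ η ε ≤ 1)
    (hη_mod : ∀ ε : ℝ, 0 < ε → ε ≤ 2 → ∀ x y : X, ‖x‖ ≤ 1 → ‖y‖ ≤ 1 →
      ε ≤ ‖x - y‖ → ‖x + y‖ / 2 ≤ 1 - η ε) :
    ConvexOn ℝ (Set.Ici (0 : ℝ)) (etaTilde η) ∧
    (∀ ε : ℝ, 0 ≤ ε → etaTilde η ε ≤ ε / 2) ∧
    (∀ ε : ℝ, 0 < ε → ε ≤ 2 → 0 < etaTilde η ε ∧ etaTilde η ε ≤ eta1 η ε) ∧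
    (∀ ε : ℝ, 0 < ε → ε ≤ 2 → ∀ x y : X, ‖x‖ ≤ 1 → ‖y‖ ≤ 1 →
      ε ≤ ‖x - y‖ → ‖x + y‖ / 2 ≤ 1 - etaTilde η ε) := by
  have h1 : ∀ ε : ℝ, 0 < ε → ε ≤ 2 → η ε ≤ 1 := fun ε h h2 => (hη_range ε h h2).2
  have h0 : ∀ ε : ℝ, 0 < ε → ε ≤ 2 → 0 < η ε := fun ε h h2 => (hη_range ε h h2).1
  have hmono := eta1_mono η h1 h0
  have hnn := eta1_nonneg η h1 h0
  have hle1 := eta1_le_one η h1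
  have hint : ∀ a b : ℝ, IntervalIntegrable (eta1 η) MeasureTheory.volume a b :=
    fun a b => hmono.intervalIntegrable
  have hub : ∀ a b : ℝ, a ≤ b → (∫ t in a..b, eta1 η t) ≤ (b - a) * eta1 η b := by
    intro a b hab
    have := intervalIntegral.integral_mono_on hab (hint a b)
      intervalIntegrable_const (fun x hx => hmono hx.2)
    simpa [smul_eq_mul, mul_comm] using this
  have hlb : ∀ a b : ℝ, a ≤ b → (b - a) * eta1 η a ≤ ∫ t in a..b, eta1 η t := by
    intro a b hab
    have := intervalIntegral.integral_mono_on hab intervalIntegrable_const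
      (hint a b) (fun x hx => hmono hx.1)
    simpa [smul_eq_mul, mul_comm] using this
  have hconvF : ConvexOn ℝ (Set.Ici (0 : ℝ)) (fun ε => ∫ t in (0:ℝ)..ε, eta1 η t) := by
    refine convexOn_of_slope_mono_adjacent (convex_Ici 0) ?_
    intro x y z _ _ hxy hyz
    have hadd1 := intervalIntegral.integral_add_adjacent_intervals (hint 0 x) (hint x y)
    have hadd2 := intervalIntegral.integral_add_adjacent_intervals (hint 0 y) (hint y z)
    have s1 : (∫ t in (0:ℝ)..y, eta1 η t) - ∫ t in (0:ℝ)..x, eta1 η t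
        ≤ (y - x) * eta1 η y := by
      rw [← hadd1]; have := hub x y hxy.le; linarith
    have s2 : (z - y) * eta1 η y
        ≤ (∫ t in (0:ℝ)..z, eta1 η t) - ∫ t in (0:ℝ)..y, eta1 η t := by
      rw [← hadd2]; have := hlb y z hyz.le; linarith
    have hxy' : 0 < y - x := by linarith
    have hyz' : 0 < z - y := by linarith
    rw [div_le_div_iff₀ hxy' hyz']
    nlinarith [mul_le_mul_of_nonneg_left s1 hyz'.le, mul_le_mul_of_nonneg_left s2 hxy'.le]
  have hconv : ConvexOn ℝ (Set.Ici (0 : ℝ)) (etaTilde η) := by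
    have h2 := ConvexOn.smul (by norm_num : (0:ℝ) ≤ 1/2) hconvF
    have heq : etaTilde η = fun ε => (1/2:ℝ) • ∫ t in (0:ℝ)..ε, eta1 η t := by
      funext ε; simp [etaTilde, smul_eq_mul]
    rw [heq]; exact h2
  have heta1zero : eta1 η 0 = 0 := by rw [eta1, if_neg (lt_irrefl 0)]
  have hii : ∀ ε : ℝ, 0 ≤ ε → etaTilde η ε ≤ ε / 2 := by
    intro ε hε
    have h := hub 0 ε hε
    have h2 : eta1 η ε ≤ 1 := hle1 ε
    have : (∫ t in (0:ℝ)..ε, eta1 η t) ≤ ε := by nlinarith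
    rw [etaTilde]; linarith
  have hiii : ∀ ε : ℝ, 0 < ε → ε ≤ 2 → 0 < etaTilde η ε ∧ etaTilde η ε ≤ eta1 η ε := by
    intro ε hε hε2
    constructor
    · have hadd := intervalIntegral.integral_add_adjacent_intervals (hint 0 (ε/2)) (hint (ε/2) ε)
      have l1 := hlb 0 (ε/2) (by linarith)
      have l2 := hlb (ε/2) ε (by linarith)
      have hpos : 0 < eta1 η (ε/2) := eta1_pos η h1 h0 (by linarith)
      rw [etaTilde, ← hadd]
      rw [heta1zero] at l1
      nlinarith
    · have h := hub 0 ε hε.le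
      have : (∫ t in (0:ℝ)..ε, eta1 η t) ≤ 2 * eta1 η ε := by
        nlinarith [hnn ε]
      rw [etaTilde]; linarith
  refine ⟨hconv, hii, hiii, ?_⟩
  intro ε hε hε2 x y hx hy hxy
  have key : eta1 η ε ≤ 1 - ‖x + y‖ / 2 := by
    rw [eta1, if_pos hε]
    refine csSup_le (etaSet_nonempty η hε) ?_
    rintro v ⟨ε', hε', hle, rfl⟩
    have hε'2 : ε' ≤ 2 := hle.trans (min_le_left _ _)
    have hε'ε : ε' ≤ ε := hle.trans (min_le_right _ _)
    have := hη_mod ε' hε' hε'2 x y hx hy (hε'ε.trans hxy)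
    linarith
  have := (hiii ε hε hε2).2
  linarith
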